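/- Let N0 ≥ 3, k ≥ 1, and n = k·N0 − 3(k−1), and let ω be an n-bit string. For i = 1, …, k, let A_i be the N0-bit substring of ω beginning at bit position (i−1)(N0−3)+1 counted from the most significant bit; equivalently A_i = ⌊ω / 2^{n − (i−1)(N0−3) − N0}⌋ mod 2^{N0} (so that S[A_i,3] = P[A_{i+1},3] for i = 1, …, k−1). Let S_1, …, S_k be N0-bit strings with D_{N0}(S_i, A_i) ≤ 1 for all i. Suppose bit strings S_k', S_{k−1}', …, S_1' and integers c_{k−1}, …, c_1 satisfy: S_k' = S_k; and for each r = k−1 down to 1, S_r' is an L_r-bit string where L_r = N0 + (k−r)(N0−3), |c_r| ≤ 2, S[S_r,3] +_3 c_r = P[S_{r+1}',3], and S_r' = (S_r +_{N0} c_r) ∘ S[S_{r+1}', L_{r+1} − 3]. Then L_1 = n and D_n(S_1', ω) = D_{N0}(S_k, A_k) ≤ 1. -/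

import Mathlib

/-- Distance `D_n(x,y) = min(|x-y|, 2^n - |x-y|)` on n-bit strings (as naturals < 2^n). -/
def D (n x y : ℕ) : ℤ := min |(x : ℤ) - (y : ℤ)| (2 ^ n - |(x : ℤ) - (y : ℤ)|)

/-- Wrap-around addition `x +_n c`: the unique natural in [0, 2^n) congruent to x + c mod 2^n. -/
def wadd (n : ℕ) (x : ℕ) (c : ℤ) : ℕ := (((x : ℤ) + c) % (2 ^ n : ℤ)).toNat

/-- `P[x,k]`: the k-bit prefix of the n-bit string x. -/
def pre (n k x : ℕ) : ℕ := x / 2 ^ (n - k)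

/-- `S[x,k]`: the k-bit suffix of x. -/
def suf (k x : ℕ) : ℕ := x % 2 ^ k

/-- Catenation of an m-bit string x with a t-bit string y. -/
def cat (t x y : ℕ) : ℕ := x * 2 ^ t + y

/-!
Let `e` be the signed error of the last block: `S_k ≡ A_k + e (mod 2^N0)` with `|e| ≤ 1`. Going down
from `r = k` one shows `S'_r ≡ ω + e (mod 2^(L_r))`. In the step, the low `L_{r+1} - 3` bits of
`S'_{r+1}` and of `ω + e` differ by a carry `ε ∈ {-1, 0, 1}`, which reappears in the three overlap
bits. The synchronisation condition `S[S_r,3] +_3 c_r = P[S'_{r+1},3]` then forces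
`e_r + c_r ≡ ε (mod 8)`, hence `e_r + c_r = ε` because `|e_r + c_r| ≤ 3`; so `S_r +_{N0} c_r` is the
`r`-th block of `ω` shifted by exactly that carry, and the catenation is again `ω + e` modulo
`2^(L_r)`. At `r = 1` this gives `D_n(S'_1, ω) = |e|`.
-/

lemma D_eq_abs_of_modEq {n x y : ℕ} {e : ℤ} (hx : x < 2 ^ n) (hy : y < 2 ^ n)
    (he : 2 * |e| ≤ 2 ^ n) (h : (x : ℤ) ≡ y + e [ZMOD 2 ^ n]) : D n x y = |e| := by
  obtain ⟨t, ht⟩ := h.dvd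
  have hx' : (x : ℤ) < 2 ^ n := by exact_mod_cast hx
  have hy' : (y : ℤ) < 2 ^ n := by exact_mod_cast hy
  have hP : (0 : ℤ) < 2 ^ n := by positivity
  unfold D
  generalize (2 : ℤ) ^ n = P at *
  obtain ⟨ht₁, ht₂⟩ : -1 ≤ t ∧ t ≤ 1 := by
    constructor <;> by_contra! <;> cases abs_cases e <;> nlinarith
  interval_cases t <;> cases abs_cases e <;> cases abs_cases ((x : ℤ) - y) <;>
    simp_all only [abs_of_nonneg, abs_of_neg] <;> omega

lemma exists_modEq_abs_eq_D {n x y : ℕ} (hx : x < 2 ^ n) (hy : y < 2 ^ n) :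
    ∃ e : ℤ, (x : ℤ) ≡ y + e [ZMOD 2 ^ n] ∧ |e| = D n x y := by
  have hx' : (x : ℤ) < 2 ^ n := by exact_mod_cast hx
  have hy' : (y : ℤ) < 2 ^ n := by exact_mod_cast hy
  obtain ⟨e, he, hmod⟩ : ∃ e : ℤ, 2 * |e| ≤ 2 ^ n ∧ (x : ℤ) ≡ y + e [ZMOD 2 ^ n] := by
    rcases le_or_gt (2 * |(x : ℤ) - y|) (2 ^ n) with h | h
    · exact ⟨x - y, h, by rw [add_sub_cancel]⟩
    rcases abs_cases ((x : ℤ) - y) with ⟨hd, hd0⟩ | ⟨hd, hd0⟩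
    · refine ⟨x - y - 2 ^ n, ?_, (Int.modEq_iff_dvd.mpr ⟨-1, by ring⟩)⟩
      rw [abs_of_neg (by linarith)]; linarith
    · refine ⟨x - y + 2 ^ n, ?_, (Int.modEq_iff_dvd.mpr ⟨1, by ring⟩)⟩
      rw [abs_of_nonneg (by linarith)]; linarith
  exact ⟨e, hmod, (D_eq_abs_of_modEq hx hy he hmod).symm⟩

lemma wadd_lt (n x : ℕ) (c : ℤ) : wadd n x c < 2 ^ n := by
  have h := Int.emod_lt_of_pos ((x : ℤ) + c) (by positivity : (0 : ℤ) < 2 ^ n)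
  rw [wadd, ← Int.ofNat_lt, Int.toNat_of_nonneg (Int.emod_nonneg _ (by positivity))]
  exact_mod_cast h

lemma wadd_modEq (n x : ℕ) (c : ℤ) : (wadd n x c : ℤ) ≡ x + c [ZMOD 2 ^ n] := by
  rw [wadd, Int.toNat_of_nonneg (Int.emod_nonneg _ (by positivity))]
  exact Int.mod_modEq _ _

lemma cat_lt {t m x y : ℕ} (hx : x < 2 ^ m) (hy : y < 2 ^ t) : cat t x y < 2 ^ (m + t) := by
  rw [cat, pow_add]
  nlinarith

lemma exists_carry_of_modEq {B s w : ℕ} (hB : 0 < B) {Q e : ℤ} (he : |e| ≤ 1)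
    (h : (s : ℤ) ≡ w + e [ZMOD B * Q]) :
    ∃ ε : ℤ, |ε| ≤ 1 ∧ ((s % B : ℕ) : ℤ) = (w % B : ℕ) + e - ε * B ∧
      ((s / B : ℕ) : ℤ) ≡ (w / B : ℕ) + ε [ZMOD Q] := by
  have hs := Nat.div_add_mod' s B
  have hw := Nat.div_add_mod' w B
  have hslt := Nat.mod_lt s hB
  have hwlt := Nat.mod_lt w hB
  generalize s / B = p, s % B = a, w / B = u, w % B = b at *
  subst hs hw
  obtain ⟨t, ht⟩ := h.dvd
  obtain ⟨ε, hε⟩ : (B : ℤ) ∣ b + e - a := ⟨Q * t - u + p, by push_cast at ht; linear_combination ht⟩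
  have hB' : (0 : ℤ) < B := by exact_mod_cast hB
  refine ⟨ε, ?_, by linarith, (Int.modEq_iff_dvd.mpr ⟨t, ?_⟩)⟩
  · rw [abs_le] at he ⊢
    constructor <;> by_contra! <;> push_cast at * <;> nlinarith
  · push_cast at ht
    apply mul_left_cancel₀ hB'.ne'
    linear_combination ht - hε

lemma suf_modEq (j x : ℕ) : (suf j x : ℤ) ≡ x [ZMOD 2 ^ j] := by
  rw [suf]; push_cast; exact Int.mod_modEq _ _

lemma cat_wadd_modEq {N m ω s s' : ℕ} {c e eᵣ : ℤ} (hN : 3 ≤ N)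
    (he : |e| ≤ 1) (heᵣ : |eᵣ| ≤ 1) (hc : |c| ≤ 2)
    (hs : (s : ℤ) ≡ (ω / 2 ^ m % 2 ^ N : ℕ) + eᵣ [ZMOD 2 ^ N])
    (hs' : (s' : ℤ) ≡ ω + e [ZMOD 2 ^ (m + 3)])
    (hsync : wadd 3 (suf 3 s) c = s' / 2 ^ m) :
    (cat m (wadd N s c) (suf m s') : ℤ) ≡ ω + e [ZMOD 2 ^ (N + m)] := by
  obtain ⟨ε, hε, hlow, hhigh⟩ := exists_carry_of_modEq (B := 2 ^ m) (Q := 8) (by positivity) he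
    (by rwa [pow_add] at hs')
  have h8 : (8 : ℤ) ∣ 2 ^ N := by
    simpa using pow_dvd_pow (2 : ℤ) hN
  have hT : (wadd N s c : ℤ) ≡ (ω / 2 ^ m : ℕ) + eᵣ + c [ZMOD 2 ^ N] := by
    refine (wadd_modEq N s c).trans ((hs.add_right c).trans ?_)
    push_cast
    exact ((Int.mod_modEq _ _).add_right _).add_right _
  have hsync8 : (wadd N s c : ℤ) ≡ (s' / 2 ^ m : ℕ) [ZMOD 8] := by
    rw [← hsync]
    refine ((wadd_modEq N s c).of_dvd h8).trans ?_
    exact ((suf_modEq 3 s).symm.add_right c).trans (wadd_modEq 3 _ c).symm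
  have hε_eq : ε = eᵣ + c := by
    have h := (hT.of_dvd h8).symm.trans (hsync8.trans hhigh)
    rw [add_assoc] at h
    obtain ⟨t, ht⟩ := (Int.ModEq.add_left_cancel' _ h).dvd
    rw [abs_le] at hε heᵣ hc
    omega
  have hTε : (wadd N s c : ℤ) ≡ (ω / 2 ^ m : ℕ) + ε [ZMOD 2 ^ N] := by
    rwa [hε_eq, ← add_assoc]
  have hω : (ω : ℤ) = (ω / 2 ^ m : ℕ) * 2 ^ m + (ω % 2 ^ m : ℕ) := by
    exact_mod_cast (Nat.div_add_mod' ω (2 ^ m)).symm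
  calc (cat m (wadd N s c) (suf m s') : ℤ)
      = wadd N s c * 2 ^ m + ((ω % 2 ^ m : ℕ) + e - ε * 2 ^ m) := by
        rw [cat, suf]; push_cast at hlow ⊢; rw [hlow]
    _ ≡ ((ω / 2 ^ m : ℕ) + ε) * 2 ^ m + ((ω % 2 ^ m : ℕ) + e - ε * 2 ^ m) [ZMOD 2 ^ (N + m)] := by
        rw [pow_add]; exact hTε.mul_right'.add_right _
    _ = ω + e := by
        linear_combination -hω

lemma block_length_one {N0 k : ℕ} (hN0 : 3 ≤ N0) (hk : 1 ≤ k) :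
    N0 + (k - 1) * (N0 - 3) = k * N0 - 3 * (k - 1) := by
  obtain ⟨g, rfl⟩ := Nat.exists_eq_add_of_le hN0
  obtain ⟨t, rfl⟩ := Nat.exists_eq_add_of_le hk
  simp only [add_tsub_cancel_left]
  ring_nf
  omega

lemma block_length_succ {N0 k r : ℕ} (hN0 : 3 ≤ N0) (hrk : r < k) :
    N0 + (k - (r + 1)) * (N0 - 3) = (k - r) * (N0 - 3) + 3 := by
  obtain ⟨t, rfl⟩ := Nat.exists_eq_add_of_lt hrk
  rw [show r + t + 1 - (r + 1) = t by omega, show r + t + 1 - r = t + 1 by omega, Nat.add_one_mul]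
  omega

lemma block_shift_eq {N0 k r : ℕ} (hN0 : 3 ≤ N0) (hr : 1 ≤ r) (hrk : r ≤ k) :
    k * N0 - 3 * (k - 1) - (r - 1) * (N0 - 3) - N0 = (k - r) * (N0 - 3) := by
  obtain ⟨g, rfl⟩ := Nat.exists_eq_add_of_le hN0
  obtain ⟨t, rfl⟩ := Nat.exists_eq_add_of_le hrk
  obtain ⟨q, rfl⟩ := Nat.exists_eq_add_of_le hr
  simp only [add_tsub_cancel_left]
  ring_nf
  omega

theorem stmt_15_general (N0 k : ℕ) (hN0 : 3 ≤ N0) (hk : 1 ≤ k)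
    (n : ℕ) (hn : n = k * N0 - 3 * (k - 1))
    (ω : ℕ) (hω : ω < 2 ^ n)
    (A : ℕ → ℕ)
    (hA : ∀ i, 1 ≤ i → i ≤ k →
      A i = ω / 2 ^ (n - (i - 1) * (N0 - 3) - N0) % 2 ^ N0)
    (S : ℕ → ℕ) (hSlt : ∀ i, 1 ≤ i → i ≤ k → S i < 2 ^ N0)
    (hD : ∀ i, 1 ≤ i → i ≤ k → D N0 (S i) (A i) ≤ 1)
    (L : ℕ → ℕ) (hL : ∀ r, L r = N0 + (k - r) * (N0 - 3))
    (S' : ℕ → ℕ) (c : ℕ → ℤ)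
    (hS'k : S' k = S k)
    (hc : ∀ r, 1 ≤ r → r ≤ k - 1 → |c r| ≤ 2)
    (hstep : ∀ r, 1 ≤ r → r ≤ k - 1 →
      wadd 3 (suf 3 (S r)) (c r) = pre (L (r + 1)) 3 (S' (r + 1)))
    (hrec : ∀ r, 1 ≤ r → r ≤ k - 1 →
      S' r = cat (L (r + 1) - 3) (wadd N0 (S r) (c r)) (suf (L (r + 1) - 3) (S' (r + 1)))) :
    L 1 = n ∧ D n (S' 1) ω = D N0 (S k) (A k) ∧ D N0 (S k) (A k) ≤ 1 := by
  subst hn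
  have hA' : ∀ r, 1 ≤ r → r ≤ k → A r = ω / 2 ^ ((k - r) * (N0 - 3)) % 2 ^ N0 := fun r hr hrk ↦ by
    rw [hA r hr hrk, block_shift_eq hN0 hr hrk]
  have hAlt : ∀ r, 1 ≤ r → r ≤ k → A r < 2 ^ N0 := fun r hr hrk ↦ by
    rw [hA' r hr hrk]; exact Nat.mod_lt _ (by positivity)
  obtain ⟨e, hek, he⟩ := exists_modEq_abs_eq_D (hSlt k hk le_rfl) (hAlt k hk le_rfl)
  have he₁ : |e| ≤ 1 := he ▸ hD k hk le_rfl
  have hL1 : L 1 = k * N0 - 3 * (k - 1) := by rw [hL, block_length_one hN0 hk]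
  have hinv : S' 1 < 2 ^ L 1 ∧ (S' 1 : ℤ) ≡ ω + e [ZMOD 2 ^ L 1] := by
    refine Nat.decreasingInduction' (fun r hrk hr ih ↦ ?_) hk ?_
    · have hm : L (r + 1) = (k - r) * (N0 - 3) + 3 := by rw [hL, block_length_succ hN0 hrk]
      obtain ⟨eᵣ, hr_mod, heᵣ⟩ := exists_modEq_abs_eq_D (hSlt r hr hrk.le) (hAlt r hr hrk.le)
      rw [hA' r hr hrk.le] at hr_mod
      have hsync := hstep r hr (by omega)
      rw [pre, hm, Nat.add_sub_cancel] at hsync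
      rw [hm] at ih
      rw [hrec r hr (by omega), hm, Nat.add_sub_cancel, hL r]
      exact ⟨cat_lt (wadd_lt _ _ _) (Nat.mod_lt _ (by positivity)),
        cat_wadd_modEq hN0 he₁ (heᵣ ▸ hD r hr hrk.le) (hc r hr (by omega))
          hr_mod ih.2 hsync⟩
    · rw [hS'k, show L k = N0 by simp [hL]]
      refine ⟨hSlt k hk le_rfl, hek.trans ?_⟩
      rw [hA' k hk le_rfl, Nat.sub_self, zero_mul, pow_zero, Nat.div_one]
      push_cast
      exact (Int.mod_modEq _ _).add_right e
  have hn_pos : 1 ≤ L 1 := by rw [hL]; omega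
  have he₂ : 2 * |e| ≤ 2 ^ L 1 := by
    linarith [pow_le_pow_right₀ (one_le_two : (1 : ℤ) ≤ 2) hn_pos]
  rw [hL1] at hinv he₂
  refine ⟨hL1, ?_, he ▸ he₁⟩
  rw [D_eq_abs_of_modEq hinv.1 hω he₂ hinv.2, he]

/-- correctness of the error-correction algorithm (Theorem 1 of the paper). -/
theorem stmt_15 (N0 k : ℕ) (hN0 : 3 ≤ N0) (hk : 1 ≤ k)
    (n : ℕ) (hn : n = k * N0 - 3 * (k - 1))
    (ω : ℕ) (hω : ω < 2 ^ n)
    (A : ℕ → ℕ)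
    (hA : ∀ i, 1 ≤ i → i ≤ k →
      A i = ω / 2 ^ (n - (i - 1) * (N0 - 3) - N0) % 2 ^ N0)
    (S : ℕ → ℕ) (hSlt : ∀ i, 1 ≤ i → i ≤ k → S i < 2 ^ N0)
    (hD : ∀ i, 1 ≤ i → i ≤ k → D N0 (S i) (A i) ≤ 1)
    (L : ℕ → ℕ) (hL : ∀ r, L r = N0 + (k - r) * (N0 - 3))
    (S' : ℕ → ℕ) (c : ℕ → ℤ)
    (hS'k : S' k = S k)
    (hS'lt : ∀ r, 1 ≤ r → r ≤ k - 1 → S' r < 2 ^ L r)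
    (hc : ∀ r, 1 ≤ r → r ≤ k - 1 → |c r| ≤ 2)
    (hstep : ∀ r, 1 ≤ r → r ≤ k - 1 →
      wadd 3 (suf 3 (S r)) (c r) = pre (L (r + 1)) 3 (S' (r + 1)))
    (hrec : ∀ r, 1 ≤ r → r ≤ k - 1 →
      S' r = cat (L (r + 1) - 3) (wadd N0 (S r) (c r)) (suf (L (r + 1) - 3) (S' (r + 1)))) :
    L 1 = n ∧ D n (S' 1) ω = D N0 (S k) (A k) ∧ D N0 (S k) (A k) ≤ 1 :=
  stmt_15_general N0 k hN0 hk n hn ω hω A hA S hSlt hD L hL S' c hS'k hc hstep hrec
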